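/- Let w_n ∈ S_n be the longest permutation (w_n(i) = n+1-i). In the twisted group algebra A(S_n), for every g ∈ S_n: (g·w_n)* · w_n* = (∏_{a<b, g⁻¹(a) < g⁻¹(b)} X_{ab}·X_{ba}) · g*, which also equals w_n* · (w_n·g)*. -/

import Mathlib

open MvPolynomial

/-- The polynomial ring `R_n = ℂ[X_{ab} : 1 ≤ a,b ≤ n]` in `n²` commuting variables. -/
abbrev R (n : ℕ) : Type := MvPolynomial (Fin n × Fin n) ℂ

/-- The action of `S_n` on `R_n`: `g.X_{ab} = X_{g(a) g(b)}`. -/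
noncomputable def permAct {n : ℕ} (g : Equiv.Perm (Fin n)) (p : R n) : R n :=
  MvPolynomial.rename (fun ab => (g ab.1, g ab.2)) p

/-- The twisted group algebra `A(S_n) = R_n ⋊ ℂ[S_n]`, as formal `R_n`-linear
combinations of permutations. -/
abbrev A (n : ℕ) : Type := Equiv.Perm (Fin n) →₀ R n

/-- The identity element `id = 1·id` of `A(S_n)`. -/
noncomputable instance {n : ℕ} : One (A n) := ⟨Finsupp.single 1 1⟩

/-- The twisted multiplication `(p₁ g₁)·(p₂ g₂) = (p₁ · (g₁.p₂)) g₁g₂` on `A(S_n)`. -/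
noncomputable instance {n : ℕ} : Mul (A n) :=
  ⟨fun x y => x.sum fun g₁ p₁ => y.sum fun g₂ p₂ =>
    Finsupp.single (g₁ * g₂) (p₁ * permAct g₁ p₂)⟩

/-- The set of inversions `I(g) = {(a,b) : a < b, g(a) > g(b)}`. -/
def inversions {n : ℕ} (g : Equiv.Perm (Fin n)) : Finset (Fin n × Fin n) :=
  Finset.univ.filter fun ab => ab.1 < ab.2 ∧ g ab.2 < g ab.1

/-- The monomial `X_g = ∏_{(a,b) ∈ I(g⁻¹)} X_{ab}`. -/
noncomputable def Xg {n : ℕ} (g : Equiv.Perm (Fin n)) : R n :=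
  ∏ ab ∈ inversions g⁻¹, MvPolynomial.X ab

/-- The element `g* = X_g · g ∈ A(S_n)`. -/
noncomputable def gstar {n : ℕ} (g : Equiv.Perm (Fin n)) : A n :=
  Finsupp.single g (Xg g)

/-- The cycle `t_{k,j}` sending `m ↦ m+1` for `j ≤ m ≤ k-1` and `k ↦ j`,
fixing all points outside `[j,k]` (meaningful for `j ≤ k`). -/
def cyc {n : ℕ} [NeZero n] (k j : Fin n) : Equiv.Perm (Fin n) :=
  Equiv.permCongr (Equiv.addLeft j) (Fin.cycleRange (k - j))

/-! Both products are multiples of the single permutation `g` (as `w_n` is an involution), so the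
claim is an identity of monomials. The pairs `a < b` split into the inversions of `g⁻¹` and the set
`N` of the remaining ones, and composing with `w_n` exchanges the two classes. Hence
`X_{w_n} = X_N · X_g` and `X_{g w_n} = X_N`, while `g w_n` carries `X_{w_n} = ∏_{a<b} X_{ab}` to
`X_g · ∏_N X_{ba}` and `w_n` carries `X_{w_n g}` to `∏_N X_{ba}`. -/

variable {n : ℕ}

def noninversions (g : Equiv.Perm (Fin n)) : Finset (Fin n × Fin n) :=
  Finset.univ.filter fun ab => ab.1 < ab.2 ∧ g ab.1 < g ab.2

lemma prod_filter_lt_eq_prod_noninversions_mul_prod_inversions {M : Type*} [CommMonoid M]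
    (g : Equiv.Perm (Fin n)) (f : Fin n × Fin n → M) :
    ∏ ab ∈ Finset.univ.filter (fun ab : Fin n × Fin n => ab.1 < ab.2), f ab
      = (∏ ab ∈ noninversions g, f ab) * ∏ ab ∈ inversions g, f ab := by
  rw [← Finset.prod_filter_mul_prod_filter_not _ fun ab : Fin n × Fin n => g ab.1 < g ab.2,
    Finset.filter_filter, Finset.filter_filter]
  congr 2
  ext ab
  simp only [inversions, Finset.mem_filter, Finset.mem_univ, true_and, not_lt]
  refine and_congr_right fun hab => ⟨fun h => h.lt_of_ne fun h' => ?_, fun h => h.le⟩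
  exact hab.ne (g.injective h').symm

lemma prod_noninversions_apply {M : Type*} [CommMonoid M] (g : Equiv.Perm (Fin n))
    (f : Fin n × Fin n → M) :
    ∏ ab ∈ noninversions g, f (g ab.1, g ab.2) = ∏ ab ∈ noninversions g⁻¹, f ab :=
  Finset.prod_equiv (g.prodCongr g) (by simp [noninversions, and_comm]) (by simp)

lemma prod_inversions_apply_swap {M : Type*} [CommMonoid M] (g : Equiv.Perm (Fin n))
    (f : Fin n × Fin n → M) :
    ∏ ab ∈ inversions g, f (g ab.2, g ab.1) = ∏ ab ∈ inversions g⁻¹, f ab :=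
  Finset.prod_equiv ((g.prodCongr g).trans (Equiv.prodComm _ _))
    (by simp [inversions, and_comm]) (by simp)

lemma single_mul_single (g₁ g₂ : Equiv.Perm (Fin n)) (p₁ p₂ : R n) :
    (Finsupp.single g₁ p₁ * Finsupp.single g₂ p₂ : A n)
      = Finsupp.single (g₁ * g₂) (p₁ * permAct g₁ p₂) := by
  show Finsupp.sum _ _ = _
  rw [Finsupp.sum_single_index (by simp), Finsupp.sum_single_index (by simp [permAct])]

lemma gstar_mul_gstar (g₁ g₂ : Equiv.Perm (Fin n)) :
    gstar g₁ * gstar g₂ = Finsupp.single (g₁ * g₂) (Xg g₁ * permAct g₁ (Xg g₂)) :=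
  single_mul_single ..

lemma permAct_prod_X (g : Equiv.Perm (Fin n)) (s : Finset (Fin n × Fin n)) :
    permAct g (∏ ab ∈ s, X ab) = ∏ ab ∈ s, (X (g ab.1, g ab.2) : R n) := by
  simp [permAct, map_prod]

lemma revPerm_mul_revPerm : (Fin.revPerm * Fin.revPerm : Equiv.Perm (Fin n)) = 1 :=
  Equiv.ext Fin.rev_rev

lemma revPerm_inv : (Fin.revPerm : Equiv.Perm (Fin n))⁻¹ = Fin.revPerm :=
  Fin.revPerm_symm

lemma inversions_revPerm :
    inversions (Fin.revPerm : Equiv.Perm (Fin n)) = Finset.univ.filter fun ab => ab.1 < ab.2 := by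
  ext; simp [inversions]

lemma inversions_revPerm_mul (g : Equiv.Perm (Fin n)) :
    inversions (Fin.revPerm * g) = noninversions g := by
  ext; simp [inversions, noninversions]

lemma noninversions_revPerm_mul (g : Equiv.Perm (Fin n)) :
    noninversions (Fin.revPerm * g) = inversions g := by
  ext; simp [inversions, noninversions]

lemma prod_inversions_mul_revPerm {M : Type*} [CommMonoid M] (g : Equiv.Perm (Fin n))
    (f : Fin n × Fin n → M) :
    ∏ ab ∈ inversions (g * Fin.revPerm), f (Fin.revPerm ab.1, Fin.revPerm ab.2)
      = ∏ ab ∈ noninversions g, f ab.swap :=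
  (Finset.prod_equiv ((Equiv.prodComm _ _).trans (Fin.revPerm.prodCongr Fin.revPerm))
    (by simp [inversions, noninversions]) (by simp)).symm

lemma Xg_revPerm (g : Equiv.Perm (Fin n)) :
    Xg (Fin.revPerm : Equiv.Perm (Fin n)) = (∏ ab ∈ noninversions g⁻¹, X ab) * Xg g := by
  rw [Xg, revPerm_inv, inversions_revPerm,
    prod_filter_lt_eq_prod_noninversions_mul_prod_inversions g⁻¹, Xg]

lemma Xg_mul_revPerm (g : Equiv.Perm (Fin n)) :
    Xg (g * Fin.revPerm) = ∏ ab ∈ noninversions g⁻¹, X ab := by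
  rw [Xg, mul_inv_rev, revPerm_inv, inversions_revPerm_mul]

lemma permAct_revPerm_Xg_revPerm_mul (g : Equiv.Perm (Fin n)) :
    permAct Fin.revPerm (Xg (Fin.revPerm * g)) = ∏ ab ∈ noninversions g⁻¹, X ab.swap := by
  rw [Xg, permAct_prod_X, mul_inv_rev, revPerm_inv, prod_inversions_mul_revPerm]

lemma permAct_Xg_revPerm (g : Equiv.Perm (Fin n)) :
    permAct g (Xg (Fin.revPerm : Equiv.Perm (Fin n)))
      = (∏ ab ∈ noninversions g⁻¹, X ab) * ∏ ab ∈ inversions g⁻¹, X ab.swap := by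
  rw [Xg, revPerm_inv, inversions_revPerm, permAct_prod_X,
    prod_filter_lt_eq_prod_noninversions_mul_prod_inversions g, prod_noninversions_apply,
    ← prod_inversions_apply_swap g]
  rfl

lemma permAct_mul_revPerm_Xg_revPerm (g : Equiv.Perm (Fin n)) :
    permAct (g * Fin.revPerm) (Xg (Fin.revPerm : Equiv.Perm (Fin n)))
      = Xg g * ∏ ab ∈ noninversions g⁻¹, X ab.swap := by
  rw [permAct_Xg_revPerm, mul_inv_rev, revPerm_inv, noninversions_revPerm_mul,
    inversions_revPerm_mul, Xg]

/-- for the longest permutation `w_n` and every `g ∈ S_n`,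
`(g·w_n)*·w_n* = (∏_{a<b, g⁻¹(a)<g⁻¹(b)} X_{ab}X_{ba})·g* = w_n*·(w_n·g)*`. -/
theorem longest_element_rule {n : ℕ} (g : Equiv.Perm (Fin n)) :
    gstar (g * Fin.revPerm) * gstar Fin.revPerm =
      (∏ ab ∈ Finset.univ.filter
          (fun ab : Fin n × Fin n => ab.1 < ab.2 ∧ g⁻¹ ab.1 < g⁻¹ ab.2),
          (MvPolynomial.X ab * MvPolynomial.X ab.swap : R n)) • gstar g ∧
    gstar (g * Fin.revPerm) * gstar Fin.revPerm =
      gstar Fin.revPerm * gstar (Fin.revPerm * g) := by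
  have left : gstar (g * Fin.revPerm) * gstar Fin.revPerm = Finsupp.single g
      ((∏ ab ∈ noninversions g⁻¹, X ab) * (Xg g * ∏ ab ∈ noninversions g⁻¹, X ab.swap)) := by
    rw [gstar_mul_gstar, mul_assoc, revPerm_mul_revPerm, mul_one, Xg_mul_revPerm,
      permAct_mul_revPerm_Xg_revPerm]
  have right : gstar Fin.revPerm * gstar (Fin.revPerm * g) = Finsupp.single g
      ((∏ ab ∈ noninversions g⁻¹, X ab) * (Xg g * ∏ ab ∈ noninversions g⁻¹, X ab.swap)) := by
    rw [gstar_mul_gstar, ← mul_assoc, revPerm_mul_revPerm, one_mul, Xg_revPerm g,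
      permAct_revPerm_Xg_revPerm_mul, mul_assoc]
  refine ⟨?_, left.trans right.symm⟩
  rw [left, gstar, Finsupp.smul_single, smul_eq_mul, ← noninversions, Finset.prod_mul_distrib]
  congr 1
  ring
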